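/- arXiv:2510.24308 — 3 statements merged into one kernel-verified Lean document; each statement's English description precedes it below -/
import Mathlib

section
/- Let 𝔄 be a C*-algebra and let x, y ∈ 𝔄. Then x is strongly Birkhoff–James orthogonal to y if and only if ‖‖y‖²·x − y·y*·x‖ = ‖x‖·‖y‖². -/
/-!
In the unitization put `c = ‖y‖²` and `q = c - y y*`, so that the expression on the right is
`q x` with `‖q‖ ≤ c`. Testing orthogonality at `z = -c⁻¹ y* x` gives `‖q x‖ ≥ c ‖x‖`.
Conversely, if `‖q x‖ = c ‖x‖`, the C*-identity propagates this to
`‖q ^ (2 ^ k) x‖ = c ^ (2 ^ k) ‖x‖`, while functional calculus bounds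
`‖q ^ n y‖² = ‖q ^ (2n) y y*‖` by `sup_{0 ≤ t ≤ c} (c - t) ^ (2n) t ≤ c ^ (2n + 1) / (2n + 1)`.
Applying `q ^ (2 ^ k)` to `x + y z` and dividing by `c ^ (2 ^ k)` gives
`‖x‖ ≤ ‖x + y z‖ + o(1)`.
-/

/-- `x` is strongly Birkhoff–James orthogonal to `y`:
`‖x + y·z‖ ≥ ‖x‖` for every `z` in the algebra. -/
def SBJOrth {A : Type*} [NonUnitalNormedRing A] (x y : A) : Prop :=
  ∀ z : A, ‖x‖ ≤ ‖x + y * z‖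

open Filter Topology

section CStarRing

variable {B : Type*} [NormedRing B] [StarRing B] [CStarRing B]

lemma IsSelfAdjoint.sq_mul_norm_le {p : B} (hp : IsSelfAdjoint p) {x : B} {s : ℝ} (hs : 0 ≤ s)
    (h : s * ‖x‖ ≤ ‖p * x‖) : s ^ 2 * ‖x‖ ≤ ‖p ^ 2 * x‖ := by
  rcases (norm_nonneg x).eq_or_lt with hx | hx
  · rw [← hx, mul_zero]; exact norm_nonneg _
  refine le_of_mul_le_mul_left ?_ hx
  calc ‖x‖ * (s ^ 2 * ‖x‖) = (s * ‖x‖) ^ 2 := by ring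
    _ ≤ ‖p * x‖ ^ 2 := by gcongr
    _ = ‖star x * (p ^ 2 * x)‖ := by
      rw [sq, ← CStarRing.norm_star_mul_self, star_mul, hp.star_eq, sq, mul_assoc, mul_assoc]
    _ ≤ ‖x‖ * ‖p ^ 2 * x‖ := (norm_mul_le _ _).trans_eq (by rw [norm_star])

lemma IsSelfAdjoint.pow_two_pow_mul_norm_le {q : B} (hq : IsSelfAdjoint q) {x : B} {r : ℝ}
    (hr : 0 ≤ r) (h : r * ‖x‖ ≤ ‖q * x‖) (k : ℕ) :
    r ^ 2 ^ k * ‖x‖ ≤ ‖q ^ 2 ^ k * x‖ := by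
  induction k with
  | zero => simpa using h
  | succ k ih =>
    simpa only [pow_succ, pow_mul] using (hq.pow (2 ^ k)).sq_mul_norm_le (by positivity) ih

lemma IsSelfAdjoint.norm_mul_sq {p : B} (hp : IsSelfAdjoint p) {y : B}
    (hpy : Commute p (y * star y)) : ‖p * y‖ ^ 2 = ‖p ^ 2 * (y * star y)‖ := by
  calc ‖p * y‖ ^ 2 = ‖p * y * star (p * y)‖ := by rw [CStarRing.norm_self_mul_star, sq]
    _ = ‖p * (y * star y * p)‖ := by rw [star_mul, hp.star_eq]; simp only [mul_assoc]
    _ = ‖p ^ 2 * (y * star y)‖ := by rw [← hpy.eq, sq, mul_assoc]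

end CStarRing

lemma norm_le_norm_add_mul_add {R : Type*} [NonUnitalNormedRing R] {p x y : R} {s w : ℝ}
    (hs : 0 < s) (hp : ‖p‖ ≤ s) (hpx : s * ‖x‖ ≤ ‖p * x‖) (hpy : ‖p * y‖ ≤ s * w) (z : R) :
    ‖x‖ ≤ ‖x + y * z‖ + w * ‖z‖ := by
  refine le_of_mul_le_mul_left ?_ hs
  calc s * ‖x‖ ≤ ‖p * x‖ := hpx
    _ = ‖p * (x + y * z) - p * y * z‖ := by rw [mul_add, mul_assoc, add_sub_cancel_right]
    _ ≤ ‖p‖ * ‖x + y * z‖ + ‖p * y‖ * ‖z‖ :=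
      (norm_sub_le _ _).trans (add_le_add (norm_mul_le _ _) (norm_mul_le _ _))
    _ ≤ s * ‖x + y * z‖ + s * w * ‖z‖ := by gcongr
    _ = s * (‖x + y * z‖ + w * ‖z‖) := by ring

section CStarAlgebra

variable {B : Type*} [CStarAlgebra B] {a : B}

lemma algebraMap_sub_eq_cfc (ha : IsSelfAdjoint a) (c : ℝ) :
    algebraMap ℝ B c - a = cfc (fun t : ℝ => c - t) a := by
  rw [cfc_sub _ _ a, cfc_const c a, cfc_id' ℝ a]

lemma smul_sub_mul_star_mul_eq (x y : B) :
    (‖y‖ ^ 2 : ℂ) • x - y * star y * x = (algebraMap ℝ B (‖y‖ ^ 2) - y * star y) * x := by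
  rw [sub_mul, ← Algebra.smul_def, ← algebraMap_smul ℂ (‖y‖ ^ 2), Complex.coe_algebraMap]
  norm_cast

variable [PartialOrder B] [StarOrderedRing B] {c : ℝ}

lemma mem_Icc_of_mem_spectrum (ha : 0 ≤ a) (hac : a ≤ algebraMap ℝ B c) {t : ℝ}
    (ht : t ∈ spectrum ℝ a) : t ∈ Set.Icc 0 c :=
  ⟨spectrum_nonneg_of_nonneg ha ht, (le_algebraMap_iff_spectrum_le ha.isSelfAdjoint).1 hac t ht⟩

lemma norm_algebraMap_sub_le (ha : 0 ≤ a) (hac : a ≤ algebraMap ℝ B c) (hc : 0 ≤ c) :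
    ‖algebraMap ℝ B c - a‖ ≤ c := by
  rw [algebraMap_sub_eq_cfc ha.isSelfAdjoint]
  refine norm_cfc_le hc fun t ht => ?_
  obtain ⟨ht0, htc⟩ := mem_Icc_of_mem_spectrum ha hac ht
  rw [Real.norm_eq_abs, abs_le]
  constructor <;> linarith

lemma norm_algebraMap_sub_pow_mul_le (ha : 0 ≤ a) (hac : a ≤ algebraMap ℝ B c) (hc : 0 ≤ c)
    (n : ℕ) : ‖(algebraMap ℝ B c - a) ^ n * a‖ ≤ c ^ (n + 1) / (n + 1) := by
  have hcfc : (algebraMap ℝ B c - a) ^ n * a = cfc (fun t : ℝ => (c - t) ^ n * t) a := by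
    rw [algebraMap_sub_eq_cfc ha.isSelfAdjoint, ← cfc_pow _ _ a, cfc_mul _ _ a, cfc_id' ℝ a]
  rw [hcfc]
  refine norm_cfc_le (by positivity) fun t ht => ?_
  obtain ⟨ht0, htc⟩ := mem_Icc_of_mem_spectrum ha hac ht
  have hct : 0 ≤ c - t := sub_nonneg.2 htc
  have bernoulli := pow_add_mul_le_add_pow hct (by linarith) (n + 1)
  rw [sub_add_cancel, Nat.add_sub_cancel, Nat.cast_succ] at bernoulli
  rw [Real.norm_of_nonneg (by positivity), le_div_iff₀ (by positivity)]
  nlinarith [pow_nonneg hct (n + 1)]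

lemma norm_algebraMap_sub_mul_star_pow_mul_le {y : B} (hyc : y * star y ≤ algebraMap ℝ B c)
    (hc : 0 ≤ c) (n : ℕ) :
    ‖(algebraMap ℝ B c - y * star y) ^ n * y‖ ≤ c ^ n * √(c / (2 * n + 1)) := by
  set q := algebraMap ℝ B c - y * star y
  have hq : IsSelfAdjoint q :=
    (IsSelfAdjoint.algebraMap B (.all c)).sub (IsSelfAdjoint.mul_star_self y)
  have hqy : Commute q (y * star y) := (Algebra.commute_algebraMap_left c _).sub_left (.refl _)
  have hsq : ‖q ^ n * y‖ ^ 2 ≤ (c ^ n) ^ 2 * (c / (2 * n + 1)) := by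
    rw [(hq.pow n).norm_mul_sq (hqy.pow_left n), ← pow_mul]
    refine (norm_algebraMap_sub_pow_mul_le (mul_star_self_nonneg y) hyc hc _).trans_eq ?_
    push_cast
    ring
  rw [← Real.sqrt_sq (norm_nonneg _), ← Real.sqrt_sq (by positivity : 0 ≤ c ^ n),
    ← Real.sqrt_mul (sq_nonneg _)]
  exact Real.sqrt_le_sqrt hsq

end CStarAlgebra

lemma norm_smul_sub_mul_star_mul_le {B : Type*} [CStarAlgebra B] (x y : B) :
    ‖(‖y‖ ^ 2 : ℂ) • x - y * star y * x‖ ≤ ‖x‖ * ‖y‖ ^ 2 := by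
  let _ := CStarAlgebra.spectralOrder B
  have := CStarAlgebra.spectralOrderedRing B
  rw [smul_sub_mul_star_mul_eq, mul_comm ‖x‖]
  exact (norm_mul_le _ _).trans <| by
    gcongr
    exact norm_algebraMap_sub_le (mul_star_self_nonneg y)
      CStarAlgebra.mul_star_le_algebraMap_norm_sq (by positivity)

lemma tendsto_sqrt_div_two_mul_two_pow_add_one (c : ℝ) :
    Tendsto (fun k : ℕ => √(c / (2 * (2 : ℝ) ^ k + 1))) atTop (𝓝 0) := by
  have hden : Tendsto (fun k : ℕ => 2 * (2 : ℝ) ^ k + 1) atTop atTop :=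
    tendsto_atTop_add_const_right _ 1 <|
      (tendsto_pow_atTop_atTop_of_one_lt one_lt_two).const_mul_atTop two_pos
  simpa using (tendsto_const_nhds.div_atTop hden).sqrt

lemma sbjOrth_of_mul_norm_le {B : Type*} [CStarAlgebra B] {x y : B}
    (h : ‖x‖ * ‖y‖ ^ 2 ≤ ‖(‖y‖ ^ 2 : ℂ) • x - y * star y * x‖) : SBJOrth x y := by
  let _ := CStarAlgebra.spectralOrder B
  have := CStarAlgebra.spectralOrderedRing B
  rcases eq_or_ne y 0 with rfl | hy
  · intro z; simp
  set c := ‖y‖ ^ 2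
  have hc : 0 < c := by positivity
  have hyc : y * star y ≤ algebraMap ℝ B c := CStarAlgebra.mul_star_le_algebraMap_norm_sq
  set q := algebraMap ℝ B c - y * star y
  have hq : IsSelfAdjoint q :=
    (IsSelfAdjoint.algebraMap B (.all c)).sub (IsSelfAdjoint.mul_star_self y)
  have hqnorm : ‖q‖ ≤ c := norm_algebraMap_sub_le (mul_star_self_nonneg y) hyc hc.le
  have hqx : c * ‖x‖ ≤ ‖q * x‖ := by rwa [mul_comm, smul_sub_mul_star_mul_eq] at h
  intro z
  have key (k : ℕ) : ‖x‖ ≤ ‖x + y * z‖ + √(c / (2 * (2 : ℝ) ^ k + 1)) * ‖z‖ := by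
    refine norm_le_norm_add_mul_add (p := q ^ 2 ^ k) (by positivity)
      ((norm_pow_le' q (by positivity)).trans (by gcongr))
      (hq.pow_two_pow_mul_norm_le hc.le hqx k) ?_ z
    exact_mod_cast norm_algebraMap_sub_mul_star_pow_mul_le hyc hc.le (2 ^ k)
  have hlim : Tendsto (fun k : ℕ => ‖x + y * z‖ + √(c / (2 * (2 : ℝ) ^ k + 1)) * ‖z‖) atTop
      (𝓝 ‖x + y * z‖) := by
    simpa using tendsto_const_nhds.add
      ((tendsto_sqrt_div_two_mul_two_pow_add_one c).mul_const ‖z‖)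
  exact ge_of_tendsto' hlim key

lemma SBJOrth.mul_norm_le {A : Type*} [NonUnitalNormedRing A] [StarRing A] [NormedSpace ℂ A]
    [IsScalarTower ℂ A A] [SMulCommClass ℂ A A] {x y : A} (h : SBJOrth x y) :
    ‖x‖ * ‖y‖ ^ 2 ≤ ‖(‖y‖ ^ 2 : ℂ) • x - y * star y * x‖ := by
  rcases eq_or_ne ‖y‖ 0 with hy | hy
  · simp [hy]
  have hc : ((‖y‖ ^ 2 : ℝ) : ℂ) ≠ 0 := by exact_mod_cast pow_ne_zero 2 hy
  have hz : (‖y‖ ^ 2 : ℂ) • x - y * star y * x =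
      (‖y‖ ^ 2 : ℂ) • (x + y * -(((‖y‖ ^ 2 : ℝ) : ℂ)⁻¹ • (star y * x))) := by
    push_cast at hc ⊢
    rw [mul_neg, mul_smul_comm, smul_add, smul_neg, smul_smul, mul_inv_cancel₀ hc, one_smul,
      mul_assoc, sub_eq_add_neg]
  rw [hz, norm_smul, mul_comm]
  gcongr
  · simp
  · exact h _

lemma SBJOrth.of_inr {A : Type*} [NonUnitalCStarAlgebra A] {x y : A}
    (h : SBJOrth (x : Unitization ℂ A) (y : Unitization ℂ A)) : SBJOrth x y := by
  intro z
  simpa only [← Unitization.inr_mul, ← Unitization.inr_add, Unitization.norm_inr] using h z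

lemma Unitization.norm_inr_smul_sub_mul_star_mul {A : Type*} [NonUnitalCStarAlgebra A] (x y : A) :
    ‖(‖(y : Unitization ℂ A)‖ ^ 2 : ℂ) • (x : Unitization ℂ A) - y * star (y : Unitization ℂ A) * x‖
      = ‖(‖y‖ ^ 2 : ℂ) • x - y * star y * x‖ := by
  rw [← Unitization.inr_star, ← Unitization.inr_mul, ← Unitization.inr_mul,
    ← Unitization.inr_smul, ← Unitization.inr_sub, Unitization.norm_inr, Unitization.norm_inr]

/-- Lemma: `x ⊥ˢ y` iff `‖‖y‖²·x − y·y*·x‖ = ‖x‖·‖y‖²`. -/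
theorem sbj_iff_norm_eq {A : Type*} [NonUnitalCStarAlgebra A] (x y : A) :
    SBJOrth x y ↔ ‖(‖y‖ ^ 2 : ℂ) • x - y * star y * x‖ = ‖x‖ * ‖y‖ ^ 2 := by
  have hinr := Unitization.norm_inr_smul_sub_mul_star_mul x y
  have hle := norm_smul_sub_mul_star_mul_le (x : Unitization ℂ A) (y : Unitization ℂ A)
  rw [hinr, Unitization.norm_inr, Unitization.norm_inr] at hle
  refine ⟨fun h => le_antisymm hle h.mul_norm_le, fun h => .of_inr (sbjOrth_of_mul_norm_le ?_)⟩
  rw [hinr, Unitization.norm_inr, Unitization.norm_inr, h]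
end

section
/- Let 𝔄 be a C*-algebra and let x, y ∈ 𝔄. Then the following are equivalent: (i) x ⊥ˢ y; (ii) |x*| ⊥ˢ y; (iii) x ⊥ˢ |y*|; (iv) |x*| ⊥ˢ |y*|. -/
/-- The absolute value `|x| = (x*·x)^{1/2}` in a C*-algebra, so that
`cstarAbs (star x) = |x*| = (x·x*)^{1/2}`. -/
noncomputable def cstarAbs {A : Type*} [NonUnitalCStarAlgebra A] (x : A) : A :=
  cfcₙ Real.sqrt (star x * x)

/-!
Orthogonality `x ⊥ˢ y` only sees `y` through the closed right ideal `closure (y·𝔄)`, and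
`y` and `|y*|` generate the same one. On the left, `x` and `|x*|` have the same norm and each is
a limit of the other multiplied on the right by contractions, which transports `‖x‖ ≤ ‖x + y z‖`
in both directions. Both facts come from an approximate inverse `g = a / (a² + δ²)` of the
self-adjoint `a = |x*|`, together with `‖c x‖ = ‖c |x*|‖`, a consequence of `x x* = |x*|²`.
-/

open Metric

section NormedRing

variable {A : Type*} [NonUnitalNormedRing A]

theorem isClosed_setOf_sbjOrth (x : A) : IsClosed {w : A | SBJOrth x w} := by
  simp only [SBJOrth, Set.ofPred_forall]
  exact isClosed_iInter fun z => isClosed_le continuous_const (by fun_prop)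

theorem SBJOrth.of_mem_closure_range_mul {x y w : A} (h : SBJOrth x y)
    (hw : w ∈ closure (Set.range (y * ·))) : SBJOrth x w := by
  refine closure_minimal ?_ (isClosed_setOf_sbjOrth x) hw
  rintro _ ⟨t, rfl⟩ z
  simpa only [mul_assoc] using h (t * z)

theorem SBJOrth.of_mem_closure_mul_closedBall {u v y : A} (h : SBJOrth v y)
    (hnorm : ‖u‖ ≤ ‖v‖) (hv : v ∈ closure ((u * ·) '' closedBall 0 1)) : SBJOrth u y := by
  intro z
  refine le_of_forall_pos_le_add fun ε hε => ?_
  obtain ⟨_, ⟨t, ht, rfl⟩, hvt⟩ := Metric.mem_closure_iff.1 hv ε hε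
  rw [mem_closedBall_zero_iff] at ht
  rw [dist_eq_norm] at hvt
  calc ‖u‖ ≤ ‖v + y * (z * t)‖ := hnorm.trans (h (z * t))
    _ = ‖(u + y * z) * t + (v - u * t)‖ := by noncomm_ring
    _ ≤ ‖u + y * z‖ * ‖t‖ + ‖v - u * t‖ := (norm_add_le _ _).trans (by grw [norm_mul_le])
    _ ≤ ‖u + y * z‖ + ε := by gcongr; exact mul_le_of_le_one_right (norm_nonneg _) ht

end NormedRing

section CStarRing

variable {A : Type*} [NonUnitalNormedRing A] [StarRing A] [CStarRing A]

theorem norm_eq_norm_of_mul_star_eq {v w : A} (h : v * star v = w * star w) : ‖v‖ = ‖w‖ := by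
  have := congrArg norm h
  rw [CStarRing.norm_self_mul_star, CStarRing.norm_self_mul_star] at this
  exact (mul_self_inj (norm_nonneg _) (norm_nonneg _)).1 this

theorem norm_mul_eq_of_mul_star_eq {x a : A} (h : x * star x = a * star a) (c : A) :
    ‖c * x‖ = ‖c * a‖ :=
  norm_eq_norm_of_mul_star_eq <| by
    simp only [star_mul, mul_assoc]
    rw [← mul_assoc x, h, mul_assoc]

theorem norm_sub_mul_eq_of_mul_star_eq {x a : A} (h : x * star x = a * star a) (c : A) :
    ‖x - c * x‖ = ‖a - c * a‖ := by
  have expand : ∀ v : A, (v - c * v) * star (v - c * v) =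
      v * star v - v * star v * star c - c * (v * star v) + c * (v * star v) * star c := by
    intro v
    rw [star_sub, star_mul]
    noncomm_ring
  exact norm_eq_norm_of_mul_star_eq (by rw [expand, expand, h])

end CStarRing

section CStarAlgebra

variable {A : Type*} [NonUnitalCStarAlgebra A]

theorem IsSelfAdjoint.exists_approx_inverse {a : A} (ha : IsSelfAdjoint a) {δ : ℝ}
    (hδ : 0 < δ) :
    ∃ g : A, IsSelfAdjoint g ∧ Commute a g ∧ ‖g * a‖ ≤ 1 ∧ ‖a - a * g * a‖ < δ := by
  set φ : ℝ → ℝ := fun s => s / (s ^ 2 + δ ^ 2)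
  have hφ : Continuous φ := continuous_id.div (by fun_prop) fun s => by positivity
  have hid : cfcₙ (fun s : ℝ => s) a = a := cfcₙ_id' ℝ a
  have hga : cfcₙ φ a * a = cfcₙ (fun s => φ s * s) a := by
    nth_rw 2 [← hid]
    exact (cfcₙ_mul φ (fun s : ℝ => s) a hφ.continuousOn).symm
  have hdefect : a - a * cfcₙ φ a * a = cfcₙ (fun s => s - s * (φ s * s)) a := by
    rw [mul_assoc, hga, cfcₙ_sub (fun s : ℝ => s) _ a, cfcₙ_mul (fun s : ℝ => s) _ a, hid]
  refine ⟨cfcₙ φ a, cfcₙ_predicate φ a, ?_, ?_, ?_⟩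
  · simpa only [hid] using cfcₙ_commute_cfcₙ (fun s : ℝ => s) φ a
  · rw [hga]
    refine norm_cfcₙ_le fun s _ => ?_
    have : φ s * s = s ^ 2 / (s ^ 2 + δ ^ 2) := by simp only [φ]; ring
    rw [this, Real.norm_eq_abs, abs_of_nonneg (by positivity), div_le_one (by positivity)]
    nlinarith
  · rw [hdefect]
    refine (norm_cfcₙ_le (c := δ / 2) fun s _ => ?_).trans_lt (by linarith)
    have : s - s * (φ s * s) = δ ^ 2 * s / (s ^ 2 + δ ^ 2) := by
      simp only [φ]; field_simp; ring
    rw [this, Real.norm_eq_abs, abs_div, abs_mul, abs_of_pos (by positivity : (0 : ℝ) < δ ^ 2),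
      abs_of_pos (by positivity : (0 : ℝ) < s ^ 2 + δ ^ 2), div_le_iff₀ (by positivity)]
    nlinarith [sq_nonneg (|s| - δ), sq_abs s]

theorem quasispectrum_star_mul_self_nonneg (b : A) :
    ∀ s ∈ quasispectrum ℝ (star b * b), 0 ≤ s := by
  rw [Unitization.quasispectrum_eq_spectrum_inr' ℝ ℂ]
  intro s hs
  exact spectrum_star_mul_self_nonneg (b := (b : Unitization ℂ A)) s (by simpa using hs)

theorem isSelfAdjoint_cstarAbs (x : A) : IsSelfAdjoint (cstarAbs x) :=
  cfcₙ_predicate _ _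

theorem cstarAbs_mul_self (x : A) : cstarAbs x * cstarAbs x = star x * x := by
  rw [cstarAbs, ← cfcₙ_mul Real.sqrt Real.sqrt (star x * x),
    cfcₙ_congr (g := fun s => s) fun s hs =>
      Real.mul_self_sqrt (quasispectrum_star_mul_self_nonneg x s hs),
    cfcₙ_id' ℝ _ (.star_mul_self x)]

theorem mul_star_eq_cstarAbs_star_mul_star (x : A) :
    x * star x = cstarAbs (star x) * star (cstarAbs (star x)) := by
  rw [(isSelfAdjoint_cstarAbs _).star_eq, cstarAbs_mul_self, star_star]

theorem norm_cstarAbs_star (x : A) : ‖cstarAbs (star x)‖ = ‖x‖ :=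
  (norm_eq_norm_of_mul_star_eq (mul_star_eq_cstarAbs_star_mul_star x)).symm

theorem mem_closure_cstarAbs_star_mul_closedBall (x : A) :
    x ∈ closure ((cstarAbs (star x) * ·) '' closedBall 0 1) := by
  set a := cstarAbs (star x)
  have hx := mul_star_eq_cstarAbs_star_mul_star x
  refine Metric.mem_closure_iff.2 fun ε hε => ?_
  obtain ⟨g, -, -, hga, hdefect⟩ := (isSelfAdjoint_cstarAbs (star x)).exists_approx_inverse hε
  refine ⟨a * (g * x), ⟨g * x, ?_, rfl⟩, ?_⟩
  · rwa [mem_closedBall_zero_iff, norm_mul_eq_of_mul_star_eq hx]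
  · rwa [dist_eq_norm, ← mul_assoc, norm_sub_mul_eq_of_mul_star_eq hx]

theorem cstarAbs_star_mem_closure_mul_closedBall (x : A) :
    cstarAbs (star x) ∈ closure ((x * ·) '' closedBall 0 1) := by
  set a := cstarAbs (star x)
  have hx := mul_star_eq_cstarAbs_star_mul_star x
  refine Metric.mem_closure_iff.2 fun ε hε => ?_
  obtain ⟨g, hg, hag, hga, hdefect⟩ := (isSelfAdjoint_cstarAbs (star x)).exists_approx_inverse hε
  refine ⟨x * (star x * g), ⟨star x * g, ?_, rfl⟩, ?_⟩
  · rwa [mem_closedBall_zero_iff, ← norm_star, star_mul, star_star, hg.star_eq,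
      norm_mul_eq_of_mul_star_eq hx]
  · rwa [dist_eq_norm, ← mul_assoc, hx, (isSelfAdjoint_cstarAbs _).star_eq, mul_assoc a a,
      hag.eq, ← mul_assoc]

theorem sbjOrth_cstarAbs_star_left_iff (x y : A) :
    SBJOrth (cstarAbs (star x)) y ↔ SBJOrth x y :=
  ⟨fun h => h.of_mem_closure_mul_closedBall (norm_cstarAbs_star x).ge
      (cstarAbs_star_mem_closure_mul_closedBall x),
    fun h => h.of_mem_closure_mul_closedBall (norm_cstarAbs_star x).le
      (mem_closure_cstarAbs_star_mul_closedBall x)⟩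

theorem sbjOrth_cstarAbs_star_right_iff (x y : A) :
    SBJOrth x (cstarAbs (star y)) ↔ SBJOrth x y :=
  ⟨fun h => h.of_mem_closure_range_mul <|
      closure_mono (Set.image_subset_range _ _) (mem_closure_cstarAbs_star_mul_closedBall y),
    fun h => h.of_mem_closure_range_mul <|
      closure_mono (Set.image_subset_range _ _) (cstarAbs_star_mem_closure_mul_closedBall y)⟩

end CStarAlgebra

/-- Lemma: the following are equivalent: (i) `x ⊥ˢ y`; (ii) `|x*| ⊥ˢ y`;
(iii) `x ⊥ˢ |y*|`; (iv) `|x*| ⊥ˢ |y*|`. -/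
theorem sbj_abs_polar {A : Type*} [NonUnitalCStarAlgebra A] (x y : A) :
    (SBJOrth x y ↔ SBJOrth (cstarAbs (star x)) y) ∧
    (SBJOrth x y ↔ SBJOrth x (cstarAbs (star y))) ∧
    (SBJOrth x y ↔ SBJOrth (cstarAbs (star x)) (cstarAbs (star y))) :=
  ⟨(sbjOrth_cstarAbs_star_left_iff x y).symm, (sbjOrth_cstarAbs_star_right_iff x y).symm,
    ((sbjOrth_cstarAbs_star_right_iff _ y).trans (sbjOrth_cstarAbs_star_left_iff x y)).symm⟩
end

section
/- Let 𝔄 be a unital C*-algebra and let x ∈ 𝔄 with x ≠ 0. Then the following are equivalent: (i) x is right symmetric for strong Birkhoff–James orthogonality; (ii) x is right invertible (there exists x' ∈ 𝔄 with x·x' = 1); (iii) x·x* is invertible in 𝔄. -/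
/-- `x` is right symmetric for `⊥ˢ` if `y ⊥ˢ x` implies `x ⊥ˢ y` for all `y`. -/
def RightSymmetric {A : Type*} [NonUnitalNormedRing A] (x : A) : Prop :=
  ∀ y : A, SBJOrth y x → SBJOrth x y

namespace SBJOrth

theorem zero_right {A : Type*} [NonUnitalNormedRing A] (x : A) : SBJOrth x 0 :=
  fun z => by simp

variable {A : Type*} [NormedRing A] {x y x' : A}

theorem eq_zero_of_mul_eq_one (h : SBJOrth y x) (hx' : x * x' = 1) : y = 0 := by
  have := h (x' * -y)
  rwa [← mul_assoc, hx', one_mul, add_neg_cancel, norm_zero, norm_le_zero_iff] at this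

theorem one_left_of_not_exists_mul_eq_one [HasSummableGeomSeries A] [NormOneClass A]
    (hx : ¬∃ x', x * x' = 1) : SBJOrth 1 x := by
  intro z
  by_contra! hlt
  rw [norm_one] at hlt
  obtain ⟨u, hu⟩ : IsUnit (x * z) := by
    simpa using (isUnit_one_sub_of_norm_lt_one hlt).neg
  exact hx ⟨z * ↑u⁻¹, by rw [← mul_assoc, ← hu, Units.mul_inv]⟩

end SBJOrth

section NormedRing

variable {A : Type*} [NormedRing A] {x x' : A}

theorem rightSymmetric_of_mul_eq_one (hx' : x * x' = 1) : RightSymmetric x := by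
  intro y hy
  rw [hy.eq_zero_of_mul_eq_one hx']
  exact .zero_right x

theorem exists_mul_eq_one_of_rightSymmetric [HasSummableGeomSeries A] [NormOneClass A]
    (hx : x ≠ 0) (h : RightSymmetric x) : ∃ x', x * x' = 1 := by
  by_contra hno
  exact hx <| (h 1 (.one_left_of_not_exists_mul_eq_one hno)).eq_zero_of_mul_eq_one (mul_one 1)

end NormedRing

theorem exists_mul_eq_one_iff_isUnit_mul_star {A : Type*} [CStarAlgebra A] [PartialOrder A]
    [StarOrderedRing A] {x : A} : (∃ x', x * x' = 1) ↔ IsUnit (x * star x) := by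
  refine ⟨fun ⟨x', hx'⟩ => ?_, fun hu => ?_⟩
  · nontriviality A
    have hle : (1 : A) ≤ (‖x'‖ ^ 2) • (x * star x) :=
      calc (1 : A) = (x * x') * star (x * x') := by rw [hx', star_one, mul_one]
        _ = x * (x' * star x') * star x := by rw [star_mul]; noncomm_ring
        _ ≤ x * algebraMap ℝ A (‖x'‖ ^ 2) * star x :=
            star_right_conjugate_le_conjugate CStarAlgebra.mul_star_le_algebraMap_norm_sq x
        _ = (‖x'‖ ^ 2) • (x * star x) := by rw [Algebra.smul_def, ← Algebra.commutes, mul_assoc]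
    have hx'0 : x' ≠ 0 := by rintro rfl; simp at hx'
    have hr : ‖x'‖ ^ 2 ≠ 0 := by positivity
    exact (isUnit_smul_iff (Units.mk0 _ hr) _).mp (CStarAlgebra.isUnit_of_le 1 hle)
  · obtain ⟨b, hb⟩ := hu.exists_right_inv
    exact ⟨star x * b, by rw [← mul_assoc, hb]⟩

/-- Corollary: in a unital C*-algebra, for `x ≠ 0` the following are equivalent:
(i) `x` is right symmetric for `⊥ˢ`; (ii) `x` is right invertible;
(iii) `x·x*` is invertible. -/
theorem rightSymmetric_iff_rightInvertible {A : Type*} [CStarAlgebra A]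
    (x : A) (hx : x ≠ 0) :
    (RightSymmetric x ↔ ∃ x' : A, x * x' = 1) ∧
    (RightSymmetric x ↔ IsUnit (x * star x)) := by
  have : Nontrivial A := nontrivial_of_ne x 0 hx
  let _ : PartialOrder A := CStarAlgebra.spectralOrder A
  have _ : StarOrderedRing A := CStarAlgebra.spectralOrderedRing A
  have h : RightSymmetric x ↔ ∃ x' : A, x * x' = 1 :=
    ⟨exists_mul_eq_one_of_rightSymmetric hx, fun ⟨_, hx'⟩ => rightSymmetric_of_mul_eq_one hx'⟩
  exact ⟨h, h.trans exists_mul_eq_one_iff_isUnit_mul_star⟩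
end
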